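/- In the Clifford algebra Cl_n, for integers a, i with i ≥ 1 and a − i ≥ 1, and for any k with a − i ≤ k ≤ a − 1, one has y_k · (y_a y_{a−1} ⋯ y_{a−i}) = (−1)^{i+1} (y_a y_{a−1} ⋯ y_{a−i}) · y_{k+1}. -/
import Mathlib


noncomputable section

/-- The quadratic form `Q(v) = -(v_1² + ⋯ + v_n²)` on `ℂⁿ`. -/
def Qneg (n : ℕ) : QuadraticForm ℂ (Fin n → ℂ) :=
  QuadraticMap.weightedSumSquares ℂ (fun _ : Fin n => (-1 : ℂ))

/-- The generator `c_a` (for `1 ≤ a ≤ n`) of the Clifford algebra `Cl_n` of `Q`,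
with junk value `0` outside the valid range. -/
def cC (n a : ℕ) : CliffordAlgebra (Qneg n) :=
  if h : 1 ≤ a ∧ a ≤ n then
    CliffordAlgebra.ι (Qneg n) (Pi.single (⟨a - 1, by omega⟩ : Fin n) 1)
  else 0

/-- `y_a = (c_{a+1} - c_a)/√2 ∈ Cl_n`. -/
def yC (n a : ℕ) : CliffordAlgebra (Qneg n) :=
  ((Real.sqrt 2 : ℂ))⁻¹ • (cC n (a + 1) - cC n a)

lemma Qneg_single (n : ℕ) (j : Fin n) : Qneg n (Pi.single j 1) = -1 := by
  simp [Qneg, QuadraticMap.weightedSumSquares_apply, Pi.single_apply]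

lemma polar_single (n : ℕ) (i j : Fin n) (h : i ≠ j) :
    QuadraticMap.polar (Qneg n) (Pi.single i 1) (Pi.single j 1) = 0 := by
  simp only [QuadraticMap.polar, Qneg, QuadraticMap.weightedSumSquares_apply, Pi.single_apply,
    Pi.add_apply]
  have key : ∀ x : Fin n,
      (-1 : ℂ) • (((if x = i then (1:ℂ) else 0) + if x = j then 1 else 0) *
        ((if x = i then (1:ℂ) else 0) + if x = j then 1 else 0))
      = (-1 : ℂ) • ((if x = i then (1:ℂ) else 0) * (if x = i then (1:ℂ) else 0))
        + (-1 : ℂ) • ((if x = j then (1:ℂ) else 0) * (if x = j then (1:ℂ) else 0)) := by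
    intro x
    by_cases h1 : x = i <;> by_cases h2 : x = j <;> simp_all
  rw [Finset.sum_congr rfl fun x _ => key x, Finset.sum_add_distrib]
  simp [Pi.single_apply]

lemma cC_sq (n a : ℕ) (h1 : 1 ≤ a) (h2 : a ≤ n) : cC n a * cC n a = -1 := by
  rw [cC, dif_pos ⟨h1, h2⟩, CliffordAlgebra.ι_sq_scalar, Qneg_single]
  simp

lemma cC_anticomm (n a b : ℕ) (hab : a ≠ b) : cC n a * cC n b = -(cC n b * cC n a) := by
  by_cases ha : 1 ≤ a ∧ a ≤ n
  · by_cases hb : 1 ≤ b ∧ b ≤ n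
    · rw [cC, dif_pos ha, cC, dif_pos hb]
      have h := CliffordAlgebra.ι_mul_ι_add_swap (Q := Qneg n)
        (Pi.single (⟨a - 1, by omega⟩ : Fin n) 1) (Pi.single (⟨b - 1, by omega⟩ : Fin n) 1)
      rw [polar_single] at h
      · rw [map_zero] at h
        exact eq_neg_of_add_eq_zero_left h
      · simp only [ne_eq, Fin.mk.injEq]; omega
    · have : cC n b = 0 := by rw [cC, dif_neg hb]
      simp [this]
  · have : cC n a = 0 := by rw [cC, dif_neg ha]
    simp [this]

lemma invsqrt2_sq : ((Real.sqrt 2 : ℂ))⁻¹ * ((Real.sqrt 2 : ℂ))⁻¹ = (2:ℂ)⁻¹ := by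
  have h2 : ((Real.sqrt 2:ℝ):ℂ) * ((Real.sqrt 2:ℝ):ℂ) = (2:ℂ) := by
    rw [← Complex.ofReal_mul, Real.mul_self_sqrt (by norm_num)]
    norm_num
  rw [← mul_inv, h2]

lemma yC_mul_yC (n j k : ℕ) : yC n j * yC n k
    = (2:ℂ)⁻¹ • ((cC n (j+1) - cC n j) * (cC n (k+1) - cC n k)) := by
  rw [yC, yC, smul_mul_assoc, mul_smul_comm, smul_smul, invsqrt2_sq]

lemma yC_sq (n j : ℕ) (h1 : 1 ≤ j) (h2 : j < n) : yC n j * yC n j = -1 := by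
  rw [yC_mul_yC]
  have e1 := cC_sq n (j+1) (by omega) (by omega)
  have e2 := cC_sq n j h1 (by omega)
  have a01 := cC_anticomm n (j+1) j (by omega)
  have key : (cC n (j+1) - cC n j) * (cC n (j+1) - cC n j) = -2 := by
    simp only [sub_mul, mul_sub]
    rw [e1, e2, a01]
    noncomm_ring
    simp
  rw [key, show ((-2 : CliffordAlgebra (Qneg n))) = (-2:ℂ) • 1 by
    rw [← Algebra.algebraMap_eq_smul_one, map_neg, map_ofNat], smul_smul]
  norm_num

lemma yC_anticomm (n j k : ℕ) (h : j + 2 ≤ k) :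
    yC n j * yC n k = -(yC n k * yC n j) := by
  rw [yC_mul_yC, yC_mul_yC, ← smul_neg]
  congr 1
  have a1 := cC_anticomm n (j+1) (k+1) (by omega)
  have a2 := cC_anticomm n (j+1) k (by omega)
  have a3 := cC_anticomm n j (k+1) (by omega)
  have a4 := cC_anticomm n j k (by omega)
  simp only [sub_mul, mul_sub]
  rw [a1, a2, a3, a4]
  noncomm_ring

lemma yC_braid (n j : ℕ) (h : j + 1 ≤ n) :
    yC n j * yC n (j+1) + yC n (j+1) * yC n j = 1 := by
  rw [yC_mul_yC, yC_mul_yC, ← smul_add]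
  have e1 := cC_sq n (j+1) (by omega) h
  have a12 := cC_anticomm n (j+1) (j+2) (by omega)
  have a02 := cC_anticomm n j (j+2) (by omega)
  have a01 := cC_anticomm n j (j+1) (by omega)
  have key : (cC n (j+1) - cC n j) * (cC n (j+1+1) - cC n (j+1))
      + (cC n (j+1+1) - cC n (j+1)) * (cC n (j+1) - cC n j) = 2 := by
    simp only [sub_mul, mul_sub]
    rw [show j+1+1 = j+2 from rfl, e1, a12, a02, a01]
    noncomm_ring
    simp
  rw [show j+1+1 = j+2 from rfl] at key ⊢
  rw [key, show ((2 : CliffordAlgebra (Qneg n))) = (2:ℂ) • 1 by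
    rw [← Algebra.algebraMap_eq_smul_one, map_ofNat], smul_smul]
  norm_num

lemma y_sandwich1 (n j : ℕ) (h1 : 1 ≤ j) (h2 : j + 1 < n) :
    yC n j * (yC n (j+1) * yC n j) = yC n j + yC n (j+1) := by
  have hb := yC_braid n j (by omega)
  have hsb := yC_sq n j h1 (by omega)
  have h1' : yC n j * yC n (j+1) = 1 - yC n (j+1) * yC n j := eq_sub_of_add_eq hb
  rw [← mul_assoc, h1', sub_mul, one_mul, mul_assoc, hsb, mul_neg_one, sub_neg_eq_add]

lemma y_sandwich2 (n j : ℕ) (h1 : 1 ≤ j) (h2 : j + 1 < n) :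
    yC n (j+1) * (yC n j * yC n (j+1)) = yC n j + yC n (j+1) := by
  have hb := yC_braid n j (by omega)
  have hs1 := yC_sq n (j+1) (by omega) h2
  have h1' : yC n j * yC n (j+1) = 1 - yC n (j+1) * yC n j := eq_sub_of_add_eq hb
  rw [h1', mul_sub, mul_one, ← mul_assoc, hs1, neg_one_mul, sub_neg_eq_add, add_comm]

def PY (n a i : ℕ) : CliffordAlgebra (Qneg n) :=
  ((List.range (i + 1)).map fun r => yC n (a - r)).prod

lemma PY_zero (n a : ℕ) : PY n a 0 = yC n a := by
  show (List.map (fun r => yC n (a - r)) (List.range 1)).prod = yC n a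
  rw [List.range_succ]
  simp

lemma PY_succ (n a i : ℕ) : PY n a (i+1) = PY n a i * yC n (a - (i+1)) := by
  unfold PY
  rw [List.range_succ, List.map_append, List.prod_append]
  simp

lemma yk_PY (n a k : ℕ) : ∀ j, k + 2 ≤ a - j →
    yC n k * PY n a j = (-1:ℂ)^(j+1) • (PY n a j * yC n k) := by
  intro j
  induction j with
  | zero =>
    intro h
    rw [PY_zero, yC_anticomm n k a (by omega)]
    simp
  | succ j ihj =>
    intro h
    rw [PY_succ, ← mul_assoc, ihj (by omega), smul_mul_assoc, mul_assoc,
      yC_anticomm n k (a - (j+1)) (by omega)]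
    simp [pow_succ, mul_smul, mul_assoc]

lemma main_lemma (n a : ℕ) (han : a < n) : ∀ i, 1 ≤ i → i < a → ∀ k, a - i ≤ k → k ≤ a - 1 →
    yC n k * PY n a i = (-1:ℂ)^(i+1) • (PY n a i * yC n (k+1)) := by
  intro i
  induction i with
  | zero => intro h; omega
  | succ i ih =>
    intro _ hia k hk1 hk2
    rcases Nat.eq_zero_or_pos i with rfl | hipos
    · -- base case i+1 = 1, k = a-1
      have hk : k = a - 1 := by omega
      subst hk
      have ha1 : a - 1 + 1 = a := by omega
      rw [PY_succ, PY_zero, ha1]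
      have s1 := y_sandwich1 n (a-1) (by omega) (by rw [ha1]; omega)
      have s2 := y_sandwich2 n (a-1) (by omega) (by rw [ha1]; omega)
      rw [ha1] at s1 s2
      rw [show yC n (a-1) * (yC n a * yC n (a-1)) = yC n (a-1) * (yC n a * yC n (a-1)) from rfl]
      rw [show (yC n a * yC n (a-1)) * yC n a = yC n a * (yC n (a-1) * yC n a) from by
        noncomm_ring]
      rw [s1, s2]
      norm_num
    · by_cases hc : a - i ≤ k
      · -- case A
        have ihk := ih hipos (by omega) k hc hk2
        rw [PY_succ, ← mul_assoc, ihk, smul_mul_assoc, mul_assoc]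
        have hsw : yC n (k+1) * yC n (a-(i+1)) = -(yC n (a-(i+1)) * yC n (k+1)) := by
          rw [yC_anticomm n (a-(i+1)) (k+1) (by omega), neg_neg]
        rw [hsw]
        simp [pow_succ, mul_smul, mul_assoc]
      · -- case B: k = a - (i+1)
        obtain ⟨m, rfl⟩ : ∃ m, i = m + 1 := ⟨i - 1, by omega⟩
        have hk : k = a - (m+2) := by omega
        subst hk
        have hk1' : a - (m+2) + 1 = a - (m+1) := by omega
        rw [PY_succ, PY_succ, hk1']
        have hswk := yk_PY n a (a - (m+2)) m (by omega)
        have s1 := y_sandwich1 n (a-(m+2)) (by omega) (by omega)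
        have s2 := y_sandwich2 n (a-(m+2)) (by omega) (by omega)
        rw [hk1'] at s1 s2
        calc yC n (a-(m+2)) * (PY n a m * yC n (a-(m+1)) * yC n (a-(m+2)))
            = (yC n (a-(m+2)) * PY n a m) * (yC n (a-(m+1)) * yC n (a-(m+2))) := by
              noncomm_ring
          _ = ((-1:ℂ)^(m+1) • (PY n a m * yC n (a-(m+2)))) *
                (yC n (a-(m+1)) * yC n (a-(m+2))) := by rw [hswk]
          _ = (-1:ℂ)^(m+1) • (PY n a m *
                (yC n (a-(m+2)) * (yC n (a-(m+1)) * yC n (a-(m+2))))) := by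
              rw [smul_mul_assoc]; congr 1; noncomm_ring
          _ = (-1:ℂ)^(m+1) • (PY n a m * (yC n (a-(m+2)) + yC n (a-(m+1)))) := by rw [s1]
          _ = (-1:ℂ)^(m+1+1+1) • (PY n a m * yC n (a-(m+1)) * yC n (a-(m+2)) * yC n (a-(m+1))) := by
              rw [show PY n a m * yC n (a-(m+1)) * yC n (a-(m+2)) * yC n (a-(m+1))
                  = PY n a m * (yC n (a-(m+1)) * (yC n (a-(m+2)) * yC n (a-(m+1)))) from by
                noncomm_ring, s2,
                show ((-1:ℂ)^(m+1+1+1)) = (-1:ℂ)^(m+1) from by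
                  rw [show m+1+1+1 = (m+1)+2 from rfl, pow_add]; norm_num]


/-- In `Cl_n`: for `i ≥ 1`, `a - i ≥ 1` and `a - i ≤ k ≤ a - 1`, one has
`y_k (y_a y_{a-1} ⋯ y_{a-i}) = (-1)^{i+1} (y_a y_{a-1} ⋯ y_{a-i}) y_{k+1}`. -/
theorem statement12 (n a i k : ℕ) (hi : 1 ≤ i) (hai : i < a) (han : a < n)
    (hk1 : a - i ≤ k) (hk2 : k ≤ a - 1) :
    yC n k * (((List.range (i + 1)).map fun r => yC n (a - r)).prod)
      = (-1 : ℂ) ^ (i + 1) •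
        ((((List.range (i + 1)).map fun r => yC n (a - r)).prod) * yC n (k + 1)) := by
  exact main_lemma n a han i hi hai k hk1 hk2
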